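/- arXiv:2106.07962 — 4 statements merged into one kernel-verified Lean document; each statement's English description precedes it below -/
import Mathlib

section
/- Suppose gcd(n, q) = 1. Let C be a cyclic code of length n over R with component codes C_1, …, C_e. Then C is an LCD code if and only if C_i is a reversible code of length n over 𝔽_q for every i with 1 ≤ i ≤ e. -/
open Polynomial

noncomputable section

/-- The ring `R = 𝔽_q[u]/⟨u^e − 1⟩`. -/
abbrev Rring (F : Type) [Field F] (e : ℕ) : Type := AdjoinRoot ((X : Polynomial F) ^ e - 1)

/-- Dual of a linear code (submodule of `ι → S`) with respect to the standard
bilinear form `⟨x, y⟩ = ∑ j, x j * y j`. -/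
def dualCode {S ι : Type} [CommRing S] [Fintype ι] (C : Submodule S (ι → S)) :
    Submodule S (ι → S) where
  carrier := {x | ∀ y ∈ C, ∑ j, x j * y j = 0}
  add_mem' := by
    intro a b ha hb y hy
    have : ∑ j, (a j + b j) * y j = (∑ j, a j * y j) + ∑ j, b j * y j := by
      rw [← Finset.sum_add_distrib]; simp [add_mul]
    simpa [this] using by rw [ha y hy, hb y hy, add_zero]
  zero_mem' := by intro y hy; simp
  smul_mem' := by
    intro r x hx y hy
    have : ∑ j, (r • x) j * y j = r * ∑ j, x j * y j := by
      rw [Finset.mul_sum]; simp [mul_assoc]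
    rw [this, hx y hy, mul_zero]

/-- Dual of an arbitrary set of words with respect to the standard bilinear form. -/
def dualSet {S ι : Type} [CommRing S] [Fintype ι] (s : Set (ι → S)) : Set (ι → S) :=
  {x | ∀ y ∈ s, ∑ j, x j * y j = 0}

/-- The Gray map `φ : R^n → 𝔽_q^{en}` determined by the algebra maps `σ_i : R → 𝔽_q`
and the matrix `M`: it sends `(r_0, …, r_{n−1})` to the concatenation of the row
vectors `(σ_1(r_j), …, σ_e(r_j))·M`. -/
def grayMap {F : Type} [Field F] {e n : ℕ}
    (σ : Fin e → (Rring F e →ₐ[F] F)) (M : Matrix (Fin e) (Fin e) F)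
    (r : Fin n → Rring F e) : Fin n × Fin e → F :=
  fun jk => ∑ i, σ i (r jk.1) * M i jk.2

/-- The `i`-th component code of a linear code `C ⊆ R^n`: the image of `C` under the
map applying `σ_i` to each coordinate. -/
def compCode {F : Type} [Field F] {e n : ℕ}
    (σi : Rring F e →ₐ[F] F) (C : Submodule (Rring F e) (Fin n → Rring F e)) :
    Submodule F (Fin n → F) :=
  Submodule.map (σi.toLinearMap.compLeft (Fin n)) (C.restrictScalars F)

/-- The cyclic shift `(c_0, …, c_{n−1}) ↦ (c_{n−1}, c_0, …, c_{n−2})`. -/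
def cyclicShift {S : Type} {n : ℕ} [NeZero n] (c : Fin n → S) : Fin n → S :=
  fun j => c (j - 1)

/-- The identification of `S^n` with `S[x]/⟨x^n − 1⟩`,
`(c_0, …, c_{n−1}) ↦ c_0 + c_1 x + ⋯ + c_{n−1} x^{n−1}`. -/
def toPoly {S : Type} [CommRing S] {n : ℕ} (c : Fin n → S) :
    Polynomial S ⧸ Ideal.span {(X : Polynomial S) ^ n - 1} :=
  Ideal.Quotient.mk _ (∑ j : Fin n, Polynomial.C (c j) * X ^ (j : ℕ))

end

section AuxField

open Finset
open scoped Fin.NatCast Fin.CommRing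

theorem mem_dualCode {S ι : Type} [CommRing S] [Fintype ι] {C : Submodule S (ι → S)}
    {x : ι → S} : x ∈ dualCode C ↔ ∀ y ∈ C, ∑ j, x j * y j = 0 := Iff.rfl

theorem rev_eq_neg {n : ℕ} [NeZero n] (j : Fin n) : j.rev = -1 - j := by
  have h0 : (Fin.rev 0 : Fin n) = -1 := by
    obtain ⟨m, rfl⟩ := Nat.exists_eq_succ_of_ne_zero (NeZero.ne n)
    ext
    rw [Fin.val_rev_zero, Fin.coe_neg_one]
    rfl
  calc j.rev = Fin.rev (0 + j) := by rw [zero_add]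
    _ = Fin.rev 0 - j := Fin.rev_add 0 j
    _ = -1 - j := by rw [h0]

theorem iter_shift {S : Type} {n : ℕ} [NeZero n] (k : ℕ) (c : Fin n → S) (j : Fin n) :
    (cyclicShift^[k] c) j = c (j - (k : Fin n)) := by
  induction k generalizing c j with
  | zero => simp
  | succ m ih =>
    rw [Function.iterate_succ_apply, ih, cyclicShift]
    congr 1
    push_cast
    ring

theorem iter_shift_mem {F : Type} [Field F] {n : ℕ} [NeZero n] (D : Submodule F (Fin n → F))
    (hc : ∀ c ∈ D, cyclicShift c ∈ D) (k : ℕ) :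
    ∀ c ∈ D, cyclicShift^[k] c ∈ D := by
  induction k with
  | zero => intro c h; simpa using h
  | succ m ih => intro c h; rw [Function.iterate_succ_apply]; exact ih _ (hc c h)

theorem invShift_mem {F : Type} [Field F] {n : ℕ} [NeZero n] (D : Submodule F (Fin n → F))
    (hc : ∀ c ∈ D, cyclicShift c ∈ D) :
    ∀ c ∈ D, (fun j => c (j + 1)) ∈ D := by
  intro c hcD
  have h2 := iter_shift_mem D hc (n - 1) c hcD
  convert h2 using 2 with j
  rw [iter_shift]
  congr 1
  have hn := NeZero.pos n
  have hcast : ((n - 1 : ℕ) : Fin n) = -1 := by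
    have h3 : ((n - 1 : ℕ) : Fin n) + 1 = 0 := by
      have h4 : ((n - 1 : ℕ) : Fin n) + ((1:ℕ) : Fin n) = ((n - 1 + 1 : ℕ) : Fin n) := by
        push_cast; ring
      rw [Nat.cast_one] at h4
      rw [h4, Nat.sub_add_cancel hn]
      ext; simp [Fin.val_natCast, Nat.mod_self]
    linear_combination h3
  rw [hcast]
  ring

theorem pow_sub_pow_mod_dvd {F : Type} [CommRing F] (n a : ℕ) :
    (X ^ n - 1 : Polynomial F) ∣ X ^ a - X ^ (a % n) := by
  obtain ⟨d, hd⟩ : ∃ d, a = n * d + a % n := ⟨a / n, (Nat.div_add_mod a n).symm⟩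
  obtain ⟨q, hq⟩ := sub_dvd_pow_sub_pow (X ^ n : Polynomial F) 1 d
  rw [one_pow] at hq
  refine ⟨q * X ^ (a % n), ?_⟩
  have h1 : (X ^ a : Polynomial F) = (X ^ n) ^ d * X ^ (a % n) := by
    rw [← pow_mul, ← pow_add, ← hd]
  calc (X ^ a - X ^ (a % n) : Polynomial F)
      = ((X ^ n) ^ d - 1) * X ^ (a % n) := by rw [h1]; ring
    _ = (X ^ n - 1) * (q * X ^ (a % n)) := by rw [hq]; ring

/-- Reversible (and cyclic) implies LCD, over a field, when `(n : F) ≠ 0`. -/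
theorem rev_to_lcd {F : Type} [Field F] {n : ℕ} [NeZero n] (hn : (n : F) ≠ 0)
    (D : Submodule F (Fin n → F)) (hc : ∀ c ∈ D, cyclicShift c ∈ D)
    (hrev : ∀ c ∈ D, (fun j => c j.rev) ∈ D) :
    D ⊓ dualCode D = ⊥ := by
  rw [eq_bot_iff]
  rintro x ⟨hxD, hxdual⟩
  simp only [Submodule.mem_bot]
  -- Step 1: all cyclic auto-correlations of x vanish
  have key : ∀ m : Fin n, ∑ j, x j * x (m - j) = 0 := by
    intro m
    set k : Fin n := -1 - m with hk
    have hy : (fun j : Fin n => (cyclicShift^[k.val] x) j.rev) ∈ D :=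
      hrev _ (iter_shift_mem D hc k.val x hxD)
    have h0 := hxdual _ hy
    rw [← h0]
    apply Finset.sum_congr rfl
    intro j _
    congr 1
    rw [iter_shift, Fin.cast_val_eq_self, rev_eq_neg, hk]
    congr 1
    ring
  -- Step 2: polynomial argument
  set P : Polynomial F := ∑ j : Fin n, Polynomial.C (x j) * X ^ (j : ℕ) with hP
  have hdvdsq : (X ^ n - 1 : Polynomial F) ∣ P ^ 2 := by
    have hPsq : P ^ 2 = ∑ j : Fin n, ∑ l : Fin n,
        Polynomial.C (x j * x l) * X ^ ((j : ℕ) + (l : ℕ)) := by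
      rw [sq, hP, Finset.sum_mul_sum]
      apply Finset.sum_congr rfl; intro j _
      apply Finset.sum_congr rfl; intro l _
      rw [map_mul]
      ring
    have hterm : ∀ j l : Fin n, (X ^ n - 1 : Polynomial F) ∣
        (Polynomial.C (x j * x l) * X ^ ((j : ℕ) + (l : ℕ))
          - Polynomial.C (x j * x l) * X ^ (((j + l : Fin n) : ℕ))) := by
      intro j l
      have hmod : ((j + l : Fin n) : ℕ) = ((j : ℕ) + (l : ℕ)) % n := Fin.val_add j l
      have : (X ^ n - 1 : Polynomial F) ∣
          X ^ ((j : ℕ) + (l : ℕ)) - X ^ (((j : ℕ) + (l : ℕ)) % n) :=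
        pow_sub_pow_mod_dvd _ _
      rw [hmod, ← mul_sub]
      exact Dvd.dvd.mul_left this _
    have hQ : (∑ j : Fin n, ∑ l : Fin n,
        Polynomial.C (x j * x l) * X ^ (((j + l : Fin n) : ℕ)) : Polynomial F) = 0 := by
      have hswap : ∀ j : Fin n, ∑ l : Fin n,
          Polynomial.C (x j * x l) * X ^ (((j + l : Fin n) : ℕ))
          = ∑ m : Fin n, Polynomial.C (x j * x (m - j)) * X ^ ((m : ℕ)) := by
        intro j
        apply Fintype.sum_equiv (Equiv.addLeft j)
        intro l
        simp only [Equiv.coe_addLeft]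
        rw [add_sub_cancel_left]
      rw [Finset.sum_congr rfl (fun j _ => hswap j), Finset.sum_comm]
      apply Finset.sum_eq_zero
      intro m _
      rw [← Finset.sum_mul, ← map_sum, key m, map_zero, zero_mul]
    calc (X ^ n - 1 : Polynomial F) ∣ P ^ 2 - 0 := by
          rw [hPsq, ← hQ, ← Finset.sum_sub_distrib]
          apply Finset.dvd_sum
          intro j _
          rw [← Finset.sum_sub_distrib]
          exact Finset.dvd_sum fun l _ => hterm j l
      _ = P ^ 2 := by ring
  have hsq : Squarefree (X ^ n - 1 : Polynomial F) := by
    have := Polynomial.separable_X_pow_sub_C (1 : F) hn one_ne_zero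
    rw [Polynomial.C_1] at this
    exact this.squarefree
  have hdvd : (X ^ n - 1 : Polynomial F) ∣ P := (hsq.dvd_pow_iff_dvd two_ne_zero).mp hdvdsq
  have hdeg : P.degree < (X ^ n - 1 : Polynomial F).degree := by
    have h1 : (X ^ n - 1 : Polynomial F).degree = n := by
      have := Polynomial.degree_X_pow_sub_C (NeZero.pos n) (1 : F)
      rwa [Polynomial.C_1] at this
    rw [h1, hP]
    apply lt_of_le_of_lt (Polynomial.degree_sum_le _ _)
    rw [Finset.sup_lt_iff (by exact_mod_cast WithBot.bot_lt_coe n)]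
    intro j _
    apply lt_of_le_of_lt (Polynomial.degree_C_mul_X_pow_le _ _)
    exact_mod_cast j.isLt
  have hP0 : P = 0 := Polynomial.eq_zero_of_dvd_of_degree_lt hdvd hdeg
  funext t
  have hco : P.coeff (t : ℕ) = x t := by
    rw [hP, Polynomial.finset_sum_coeff]
    rw [Finset.sum_eq_single t]
    · simp
    · intro j _ hj
      rw [Polynomial.coeff_C_mul, Polynomial.coeff_X_pow,
        if_neg (fun h => hj (Fin.val_injective h).symm), mul_zero]
    · intro h; exact absurd (Finset.mem_univ t) h
  rw [hP0] at hco
  simpa using hco.symm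

end AuxField
section AuxField2
open Finset Module

variable {F : Type} [Field F] {n : ℕ} [NeZero n]

theorem dual_shift_mem (D : Submodule F (Fin n → F))
    (hc : ∀ c ∈ D, cyclicShift c ∈ D) :
    ∀ y ∈ dualCode D, cyclicShift y ∈ dualCode D := by
  intro y hy d hd
  have hd' : (fun j => d (j + 1)) ∈ D := invShift_mem D hc d hd
  have h0 := hy _ hd'
  rw [← h0]
  apply Fintype.sum_equiv (Equiv.subRight (1 : Fin n))
  intro j
  simp only [Equiv.subRight_apply, cyclicShift]
  rw [sub_add_cancel]

theorem isCompl_of_lcd (D : Submodule F (Fin n → F))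
    (hlcd : D ⊓ dualCode D = ⊥) : IsCompl D (dualCode D) := by
  constructor
  · exact disjoint_iff.mpr hlcd
  · set B : (Fin n → F) →ₗ[F] (Fin n → F) →ₗ[F] F :=
      LinearMap.mk₂ F (fun x y => ∑ j, x j * y j)
        (fun x x' y => by simp [add_mul, Finset.sum_add_distrib])
        (fun r x y => by simp [Finset.mul_sum, mul_assoc])
        (fun x y y' => by simp [mul_add, Finset.sum_add_distrib])
        (fun r x y => by simp [Finset.mul_sum]; apply Finset.sum_congr rfl; intros; ring)
      with hB
    set Ψ : (Fin n → F) →ₗ[F] Module.Dual F D :=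
      (LinearMap.lcomp F F D.subtype).comp B with hΨ
    have hker : dualCode D = LinearMap.ker Ψ := by
      ext x
      rw [LinearMap.mem_ker, LinearMap.ext_iff]
      constructor
      · intro hx d
        simpa only [hΨ, hB, LinearMap.comp_apply, LinearMap.lcomp_apply,
          LinearMap.mk₂_apply, LinearMap.zero_apply, Submodule.coe_subtype] using hx d d.2
      · intro hx y hy
        simpa only [hΨ, hB, LinearMap.comp_apply, LinearMap.lcomp_apply,
          LinearMap.mk₂_apply, LinearMap.zero_apply, Submodule.coe_subtype]
          using hx ⟨y, hy⟩
    have hV : finrank F (Fin n → F) = n := Module.finrank_fin_fun F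
    have hrk := LinearMap.finrank_range_add_finrank_ker Ψ
    have hle : finrank F (LinearMap.range Ψ) ≤ finrank F D := by
      have h1 : finrank F (LinearMap.range Ψ) ≤ finrank F (Module.Dual F D) :=
        Submodule.finrank_le _
      rwa [Subspace.dual_finrank_eq] at h1
    have hdim : n ≤ finrank F D + finrank F (dualCode D) := by
      rw [hker]
      omega
    have hsup := Submodule.finrank_sup_add_finrank_inf_eq D (dualCode D)
    rw [hlcd, finrank_bot, add_zero] at hsup
    have hsle : finrank F ↥(D ⊔ dualCode D) ≤ n := by
      have := Submodule.finrank_le (D ⊔ dualCode D)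
      omega
    have : finrank F ↥(D ⊔ dualCode D) = n := by omega
    rw [codisjoint_iff]
    exact Submodule.eq_top_of_finrank_eq (by rw [this, hV])

end AuxField2
section AuxField3
open Finset Module
open scoped Fin.NatCast Fin.CommRing

variable {F : Type} [Field F] {n : ℕ} [NeZero n]

theorem lcd_to_rev (D : Submodule F (Fin n → F))
    (hc : ∀ c ∈ D, cyclicShift c ∈ D)
    (hlcd : D ⊓ dualCode D = ⊥) :
    ∀ c ∈ D, (fun j => c j.rev) ∈ D := by
  have hcompl := isCompl_of_lcd D hlcd
  set p : (Fin n → F) →ₗ[F] (Fin n → F) :=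
    D.subtype.comp (D.projectionOnto (dualCode D) hcompl) with hp
  have pf1 : ∀ x, p x ∈ D := fun x => (D.projectionOnto (dualCode D) hcompl x).2
  have pf3 : ∀ y ∈ D, p y = y := by
    intro y hy
    simp [hp, Submodule.projectionOnto_apply_left hcompl ⟨y, hy⟩]
  have pf0 : ∀ z ∈ dualCode D, p z = 0 := by
    intro z hz
    simp [hp, Submodule.projectionOnto_apply_of_mem_right hcompl hz]
  have pf2 : ∀ x, x - p x ∈ dualCode D := by
    intro x
    obtain ⟨y, z, hy, hz, hyz⟩ := Submodule.codisjoint_iff_exists_add_eq.mp hcompl.codisjoint x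
    have h5 : p x = y := by rw [← hyz, map_add, pf3 y hy, pf0 z hz, add_zero]
    rw [h5, ← hyz, add_sub_cancel_left]
    exact hz
  have huniq : ∀ x d, d ∈ D → x - d ∈ dualCode D → p x = d := by
    intro x d hd hxd
    have h1 : p x - d ∈ D := Submodule.sub_mem D (pf1 x) hd
    have h2 : p x - d ∈ dualCode D := by
      have h6 := Submodule.sub_mem (dualCode D) hxd (pf2 x)
      have h7 : (x - d) - (x - p x) = p x - d := by abel
      rwa [h7] at h6
    have h8 : p x - d ∈ D ⊓ dualCode D := ⟨h1, h2⟩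
    rw [hlcd, Submodule.mem_bot, sub_eq_zero] at h8
    exact h8
  -- commutation with the shift
  have pcomm : ∀ x, p (cyclicShift x) = cyclicShift (p x) := by
    intro x
    apply huniq
    · exact hc _ (pf1 x)
    · have h9 : cyclicShift x - cyclicShift (p x) = cyclicShift (x - p x) := rfl
      rw [h9]
      exact dual_shift_mem D hc _ (pf2 x)
  have pcommit : ∀ (k : ℕ) x, p (cyclicShift^[k] x) = cyclicShift^[k] (p x) := by
    intro k
    induction k with
    | zero => intro x; simp
    | succ m ih =>
      intro x
      rw [Function.iterate_succ_apply, Function.iterate_succ_apply, ih, pcomm]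
  -- the convolution kernel
  set a : Fin n → F := p (Pi.single 0 1) with ha
  have hdelta : ∀ m : Fin n, (Pi.single m (1:F) : Fin n → F)
      = cyclicShift^[(m : ℕ)] (Pi.single 0 1) := by
    intro m
    funext j
    rw [iter_shift, Fin.cast_val_eq_self]
    rcases eq_or_ne j m with rfl | hjm
    · rw [sub_self]; simp
    · rw [Pi.single_apply, Pi.single_apply, if_neg hjm, if_neg (by
        rw [sub_eq_zero]; exact hjm)]
  have hpsingle : ∀ m : Fin n, p (Pi.single m (1:F)) = fun j => a (j - m) := by
    intro m
    rw [hdelta m, pcommit]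
    funext j
    rw [iter_shift, Fin.cast_val_eq_self]
  have formula : ∀ y (j : Fin n), p y j = ∑ m, y m * a (j - m) := by
    intro y j
    have hy : y = ∑ m : Fin n, y m • (Pi.single m (1:F) : Fin n → F) := by
      funext t
      rw [Finset.sum_apply]
      simp [Pi.single_apply]
    conv_lhs => rw [hy]
    rw [map_sum, Finset.sum_apply]
    apply Finset.sum_congr rfl
    intro m _
    rw [map_smul, Pi.smul_apply, hpsingle m, smul_eq_mul]
  -- self-adjointness
  have hsadj : ∀ x y, ∑ j, p x j * y j = ∑ j, x j * p y j := by
    intro x y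
    have h1 : ∑ j, p x j * (y j - p y j) = 0 := by
      have := pf2 y _ (pf1 x)
      rw [← this]
      exact Finset.sum_congr rfl fun j _ => mul_comm _ _
    have h2 : ∑ j, (x j - p x j) * p y j = 0 := pf2 x _ (pf1 y)
    calc ∑ j, p x j * y j
        = ∑ j, (p x j * p y j + p x j * (y j - p y j)) := by
          apply Finset.sum_congr rfl; intros; ring
      _ = (∑ j, p x j * p y j) + ∑ j, p x j * (y j - p y j) := Finset.sum_add_distrib
      _ = ∑ j, p x j * p y j := by rw [h1, add_zero]
      _ = (∑ j, x j * p y j) - ∑ j, (x j - p x j) * p y j := by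
          rw [← Finset.sum_sub_distrib]
          apply Finset.sum_congr rfl; intros; ring
      _ = ∑ j, x j * p y j := by rw [h2, sub_zero]
  -- symmetry of the kernel
  have hsym : ∀ k : Fin n, a k = a (-k) := by
    intro k
    have hs := hsadj (Pi.single 0 1 : Fin n → F) (Pi.single k 1 : Fin n → F)
    have hL : ∑ j, p (Pi.single 0 (1:F) : Fin n → F) j * (Pi.single k (1:F) : Fin n → F) j = a (k - 0) := by
      rw [hpsingle 0]
      simp [Pi.single_apply, mul_ite]
    have hR : ∑ j, (Pi.single 0 (1:F) : Fin n → F) j * p (Pi.single k (1:F) : Fin n → F) j = a (0 - k) := by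
      rw [hpsingle k]
      simp [Pi.single_apply, ite_mul]
    rw [hL, hR] at hs
    simpa using hs
  -- conclusion
  intro c hcD
  have hrevc : p (fun j => c j.rev) = fun j => c j.rev := by
    funext j
    rw [formula]
    have hstep : ∑ m, c m.rev * a (j - m) = ∑ m, c m * a (j - m.rev) := by
      apply Fintype.sum_equiv (Fin.revPerm)
      intro m
      simp only [Fin.revPerm_apply, Fin.rev_rev]
    rw [hstep]
    have hc2 : c j.rev = p c j.rev := by rw [pf3 c hcD]
    rw [hc2, formula]
    apply Finset.sum_congr rfl
    intro m _
    congr 1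
    rw [rev_eq_neg, rev_eq_neg]
    have := hsym (j + 1 + m)
    calc a (j - (-1 - m)) = a (j + 1 + m) := by ring_nf
      _ = a (-(j + 1 + m)) := this
      _ = a (-1 - j - m) := by ring_nf
  rw [← hrevc]
  exact pf1 _

end AuxField3
section Main
open Finset Module

/-- Suppose `gcd(n, q) = 1`. A cyclic code `C` of length `n` over
`R = 𝔽_q[u]/⟨u^e − 1⟩` with component codes `C_1, …, C_e` is an LCD code if and only
if each `C_i` is a reversible code of length `n` over `𝔽_q`, i.e. `C_i` contains the
reversal `(c_{n−1}, …, c_1, c_0)` of each of its codewords. -/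
theorem lcd_iff_components_reversible
    {F : Type} [Field F] [Fintype F] (e n : ℕ) [NeZero n] (he : 2 ≤ e)
    (hdvd : e ∣ Fintype.card F - 1)
    (hcop : Nat.Coprime n (Fintype.card F))
    (α : Fin e → F) (hα : Function.Injective α) (hroot : ∀ i, α i ^ e = 1)
    (σ : Fin e → (Rring F e →ₐ[F] F))
    (hσ : ∀ i, σ i (AdjoinRoot.root ((X : Polynomial F) ^ e - 1)) = α i)
    (C : Submodule (Rring F e) (Fin n → Rring F e))
    (hcyc : ∀ c ∈ C, cyclicShift c ∈ C) :
    C ⊓ dualCode C = ⊥ ↔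
      ∀ i, ∀ c ∈ compCode (σ i) C, (fun j => c j.rev) ∈ compCode (σ i) C := by
  classical
  -- (n : F) ≠ 0
  have hn : (n : F) ≠ 0 := by
    intro h0
    have h1 : ringChar F ∣ n := (CharP.cast_eq_zero_iff F (ringChar F) n).mp h0
    have h2 : ringChar F ∣ Fintype.card F :=
      (CharP.cast_eq_zero_iff F (ringChar F) _).mp (FiniteField.cast_card_eq_zero F)
    have h3 : ringChar F ∣ Nat.gcd n (Fintype.card F) := Nat.dvd_gcd h1 h2
    rw [Nat.Coprime] at hcop
    rw [hcop, Nat.dvd_one] at h3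
    haveI := ringChar.charP F
    exact CharP.char_ne_one F (ringChar F) h3
  have hne0 : ((X : Polynomial F) ^ e - 1) ≠ 0 := by
    have h4 := Polynomial.X_pow_sub_C_ne_zero (show 0 < e by omega) (1 : F)
    rwa [Polynomial.C_1] at h4
  -- evaluation of σ i on mk f
  have hσmk : ∀ (i : Fin e) (f : Polynomial F),
      σ i (AdjoinRoot.mk _ f) = f.eval (α i) := by
    intro i f
    rw [← AdjoinRoot.aeval_eq, ← Polynomial.aeval_algHom_apply, hσ i,
      ← Polynomial.coe_aeval_eq_eval]
  -- surjectivity of the simultaneous evaluation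
  have hsurj : ∀ v : Fin e → F, ∃ r : Rring F e, ∀ i, σ i r = v i := by
    intro v
    refine ⟨AdjoinRoot.mk _ (Lagrange.interpolate Finset.univ α v), fun i => ?_⟩
    rw [hσmk]
    exact Lagrange.eval_interpolate_at_node v hα.injOn (Finset.mem_univ i)
  -- injectivity
  have hinj : ∀ r : Rring F e, (∀ i, σ i r = 0) → r = 0 := by
    set L : Rring F e →ₗ[F] (Fin e → F) := LinearMap.pi (fun i => (σ i).toLinearMap) with hL
    have hLsurj : Function.Surjective L := by
      intro v
      obtain ⟨r, hr⟩ := hsurj v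
      exact ⟨r, funext fun i => hr i⟩
    haveI : Module.Finite F (Rring F e) := (AdjoinRoot.powerBasis hne0).finite
    have hfr : finrank F (Rring F e) = e := by
      rw [(AdjoinRoot.powerBasis hne0).finrank]
      show ((X : Polynomial F) ^ e - 1).natDegree = e
      rw [← Polynomial.C_1, Polynomial.natDegree_X_pow_sub_C]
    have h1 := LinearMap.finrank_range_add_finrank_ker L
    rw [LinearMap.range_eq_top.mpr hLsurj, finrank_top, Module.finrank_fin_fun, hfr] at h1
    have hker : LinearMap.ker L = ⊥ := Submodule.finrank_eq_zero.mp (by omega)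
    intro r hr
    have : r ∈ LinearMap.ker L := by
      rw [LinearMap.mem_ker]
      exact funext fun i => hr i
    rwa [hker, Submodule.mem_bot] at this
  -- idempotents
  have hεex : ∀ i : Fin e, ∃ εi : Rring F e, ∀ k, σ k εi = if k = i then 1 else 0 := by
    intro i
    obtain ⟨r, hr⟩ := hsurj (Pi.single i 1)
    exact ⟨r, fun k => by rw [hr k, Pi.single_apply]⟩
  choose ε hε using hεex
  -- component membership
  have hmemD : ∀ (i : Fin e) (c' : Fin n → F),
      c' ∈ compCode (σ i) C ↔ ∃ x ∈ C, ∀ j, σ i (x j) = c' j := by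
    intro i c'
    rw [compCode, Submodule.mem_map]
    constructor
    · rintro ⟨x, hx, hxc⟩
      exact ⟨x, hx, fun j => by rw [← hxc]; rfl⟩
    · rintro ⟨x, hx, hxc⟩
      exact ⟨x, hx, funext hxc⟩
  -- component codes are cyclic
  have hDcyc : ∀ i, ∀ c' ∈ compCode (σ i) C, cyclicShift c' ∈ compCode (σ i) C := by
    intro i c' hc'
    rw [hmemD] at hc' ⊢
    obtain ⟨x, hx, hxc⟩ := hc'
    exact ⟨cyclicShift x, hcyc x hx, fun j => hxc (j - 1)⟩
  -- LCD transfers componentwise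
  have hmain : C ⊓ dualCode C = ⊥ ↔
      ∀ i, compCode (σ i) C ⊓ dualCode (compCode (σ i) C) = ⊥ := by
    constructor
    · intro hC i
      rw [eq_bot_iff]
      rintro v ⟨hv1, hv2⟩
      simp only [Submodule.mem_bot]
      replace hv1 : v ∈ compCode (σ i) C := hv1
      replace hv2 : v ∈ dualCode (compCode (σ i) C) := hv2
      rw [hmemD] at hv1
      obtain ⟨d, hd, hdv⟩ := hv1
      set x : Fin n → Rring F e := ε i • d with hx
      have hxεd : ∀ j, x j = ε i * d j := fun j => rfl
      have hxC : x ∈ C := Submodule.smul_mem C (ε i) hd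
      have hxdual : x ∈ dualCode C := by
        intro y hy
        apply hinj
        intro k
        rw [map_sum]
        rcases eq_or_ne k i with rfl | hki
        · have hterm : ∀ j, σ k (x j * y j) = v j * σ k (y j) := fun j => by
            rw [show x j * y j = ε k * (d j * y j) from by rw [hxεd j]; ring,
              map_mul, hε, if_pos rfl, one_mul, map_mul, hdv j]
          rw [Finset.sum_congr rfl fun j _ => hterm j]
          exact hv2 _ ((hmemD k _).mpr ⟨y, hy, fun j => rfl⟩)
        · have hterm : ∀ j, σ k (x j * y j) = 0 := fun j => by
            rw [show x j * y j = ε i * (d j * y j) from by rw [hxεd j]; ring,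
              map_mul, hε, if_neg hki, zero_mul]
          rw [Finset.sum_congr rfl fun j _ => hterm j]
          simp
      have hxbot : x ∈ C ⊓ dualCode C := ⟨hxC, hxdual⟩
      rw [hC, Submodule.mem_bot] at hxbot
      funext j
      have hxj : x j = 0 := by rw [hxbot]; rfl
      have : v j = σ i (x j) := by
        rw [hxεd j, map_mul, hε, if_pos rfl, one_mul, hdv j]
      rw [this, hxj, map_zero]
      rfl
    · intro hD
      rw [eq_bot_iff]
      rintro x ⟨hx1, hx2⟩
      replace hx1 : x ∈ C := hx1
      replace hx2 : x ∈ dualCode C := hx2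
      simp only [Submodule.mem_bot]
      funext j
      apply hinj
      intro i
      have hcomp : (fun j => σ i (x j)) ∈
          compCode (σ i) C ⊓ dualCode (compCode (σ i) C) := by
        constructor
        · exact (hmemD i _).mpr ⟨x, hx1, fun j => rfl⟩
        · intro v hv
          rw [hmemD] at hv
          obtain ⟨y, hy, hyv⟩ := hv
          have h0 := hx2 y hy
          calc ∑ j, σ i (x j) * v j = σ i (∑ j, x j * y j) := by
                rw [map_sum]
                exact (Finset.sum_congr rfl fun j _ => by rw [map_mul, hyv j]).symm
            _ = 0 := by rw [h0, map_zero]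
      rw [hD i, Submodule.mem_bot] at hcomp
      have := congrFun hcomp j
      simpa using this
  rw [hmain]
  apply forall_congr'
  intro i
  constructor
  · intro h
    exact lcd_to_rev (compCode (σ i) C) (hDcyc i) h
  · intro h
    exact rev_to_lcd hn (compCode (σ i) C) (hDcyc i) h

end Main
end

section
/- Let C be a linear code of length n over R. Then φ(C ∩ C^⊥) = φ(C) ∩ (φ(C))^⊥, where C^⊥ is the dual of C in R^n and (φ(C))^⊥ is the dual of φ(C) in 𝔽_q^{en}. -/
open Polynomial

section GrayAux
open Polynomial
variable {F : Type} [Field F] {e n : ℕ}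

lemma sigma_mk (α : Fin e → F) (hroot : ∀ i, α i ^ e = 1)
    (σ : Fin e → (Rring F e →ₐ[F] F))
    (hσ : ∀ i, σ i (AdjoinRoot.root ((X : Polynomial F) ^ e - 1)) = α i) (i : Fin e)
    (p : Polynomial F) :
    σ i (AdjoinRoot.mk _ p) = p.eval (α i) := by
  have h0 : aeval (α i) ((X : Polynomial F) ^ e - 1) = 0 := by simp [hroot i]
  have hs : σ i = AdjoinRoot.liftAlgHom _ (Algebra.ofId F F) (α i) (by simp [hroot i]) := by
    apply AdjoinRoot.algHom_ext
    rw [hσ, AdjoinRoot.liftAlgHom_root]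
  rw [hs, AdjoinRoot.liftAlgHom_mk]
  rfl

lemma joint_inj (he : 2 ≤ e) (α : Fin e → F) (hα : Function.Injective α)
    (hroot : ∀ i, α i ^ e = 1) (σ : Fin e → (Rring F e →ₐ[F] F))
    (hσ : ∀ i, σ i (AdjoinRoot.root ((X : Polynomial F) ^ e - 1)) = α i)
    (x : Rring F e) (hx : ∀ i, σ i x = 0) : x = 0 := by
  obtain ⟨p, rfl⟩ := AdjoinRoot.mk_surjective x
  have hmonic : ((X : Polynomial F) ^ e - 1).Monic := by
    simpa using monic_X_pow_sub_C (1 : F) (by omega)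
  have hq : AdjoinRoot.mk _ p = AdjoinRoot.mk ((X : Polynomial F) ^ e - 1) (p %ₘ ((X : Polynomial F) ^ e - 1)) := by
    rw [AdjoinRoot.mk_eq_mk, modByMonic_eq_sub_mul_div p]
    exact ⟨p /ₘ ((X : Polynomial F) ^ e - 1), by ring⟩
  set q := p %ₘ ((X : Polynomial F) ^ e - 1) with hqdef
  have heval : ∀ i, q.eval (α i) = 0 := by
    intro i
    have := hx i
    rw [hq, sigma_mk α hroot σ hσ] at this
    exact this
  have h2 : ((X : Polynomial F) ^ e - 1).natDegree = e := by
    simpa using (natDegree_X_pow_sub_C (n := e) (r := (1 : F)))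
  have hdeg : q.natDegree < e := by
    have h1 : ((X : Polynomial F) ^ e - 1) ≠ 1 := by
      intro h
      rw [h] at h2
      simp at h2
      omega
    exact h2 ▸ natDegree_modByMonic_lt p hmonic h1
  have : q = 0 := by
    apply Polynomial.eq_zero_of_natDegree_lt_card_of_eval_eq_zero q hα heval
    simpa using hdeg
  rw [hq, this, map_zero]

lemma vand_kill (α : Fin e → F) (hα : Function.Injective α) (d : Fin e → F)
    (h : ∀ m : Fin e, ∑ i, α i ^ (m : ℕ) * d i = 0) : d = 0 := by
  classical
  apply Matrix.eq_zero_of_mulVec_eq_zero (M := Matrix.transpose (Matrix.vandermonde α))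
  · rw [Matrix.det_transpose]
    exact Matrix.det_vandermonde_ne_zero_iff.2 hα
  · funext m
    simpa [Matrix.mulVec, dotProduct, Matrix.vandermonde] using h m

lemma gray_inner (σ : Fin e → (Rring F e →ₐ[F] F)) (γ : F)
    (M : Matrix (Fin e) (Fin e) F)
    (hM : M * M.transpose = γ • (1 : Matrix (Fin e) (Fin e) F))
    (r s : Fin n → Rring F e) :
    ∑ jk : Fin n × Fin e, grayMap σ M r jk * grayMap σ M s jk
      = γ * ∑ i, σ i (∑ j, r j * s j) := by
  have hMM : ∀ i i', ∑ k, M i k * M i' k = if i = i' then γ else 0 := by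
    intro i i'
    have h := congrFun (congrFun hM i) i'
    simp only [Matrix.mul_apply, Matrix.transpose_apply, Matrix.smul_apply, Matrix.one_apply,
      smul_eq_mul, mul_ite, mul_one, mul_zero] at h
    exact h
  rw [Fintype.sum_prod_type]
  have key : ∀ j, ∑ k, grayMap σ M r (j, k) * grayMap σ M s (j, k)
      = γ * ∑ i, σ i (r j) * σ i (s j) := by
    intro j
    have h1 : ∀ k, grayMap σ M r (j, k) * grayMap σ M s (j, k)
        = ∑ i, ∑ i', σ i (r j) * σ i' (s j) * (M i k * M i' k) := by
      intro k
      simp only [grayMap]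
      rw [Finset.sum_mul_sum]
      exact Finset.sum_congr rfl fun i _ => Finset.sum_congr rfl fun i' _ => by ring
    simp_rw [h1]
    rw [Finset.sum_comm]
    have h2 : ∀ i, ∑ k, ∑ i', σ i (r j) * σ i' (s j) * (M i k * M i' k)
        = γ * (σ i (r j) * σ i (s j)) := by
      intro i
      rw [Finset.sum_comm]
      have h3 : ∀ i', ∑ k, σ i (r j) * σ i' (s j) * (M i k * M i' k)
          = σ i (r j) * σ i' (s j) * (if i = i' then γ else 0) := by
        intro i'
        rw [← Finset.mul_sum, hMM]
      simp_rw [h3]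
      simp [Finset.sum_ite_eq', mul_comm]
    simp_rw [h2]
    rw [← Finset.mul_sum]
  simp_rw [key]
  rw [← Finset.mul_sum, Finset.sum_comm]
  congr 1
  exact Finset.sum_congr rfl fun i _ => by
    rw [map_sum]; exact Finset.sum_congr rfl fun j _ => (map_mul _ _ _).symm

end GrayAux

/-- For a linear code `C` of length `n` over `R = 𝔽_q[u]/⟨u^e − 1⟩`,
the Gray map satisfies `φ(C ∩ C^⊥) = φ(C) ∩ (φ(C))^⊥`. -/
theorem grayMap_inter_dual
    {F : Type} [Field F] [Fintype F] (e n : ℕ) (he : 2 ≤ e)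
    (hdvd : e ∣ Fintype.card F - 1)
    (α : Fin e → F) (hα : Function.Injective α) (hroot : ∀ i, α i ^ e = 1)
    (σ : Fin e → (Rring F e →ₐ[F] F))
    (hσ : ∀ i, σ i (AdjoinRoot.root ((X : Polynomial F) ^ e - 1)) = α i)
    (γ : F) (hγ : γ ≠ 0) (M : Matrix (Fin e) (Fin e) F)
    (hM : M * M.transpose = γ • (1 : Matrix (Fin e) (Fin e) F))
    (C : Submodule (Rring F e) (Fin n → Rring F e)) :
    grayMap σ M '' ((C : Set (Fin n → Rring F e)) ∩ (dualCode C : Set (Fin n → Rring F e))) =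
      (grayMap σ M '' (C : Set (Fin n → Rring F e))) ∩
        dualSet (grayMap σ M '' (C : Set (Fin n → Rring F e))) := by
  ext x
  constructor
  · rintro ⟨r, ⟨hrC, hrD⟩, rfl⟩
    refine ⟨⟨r, hrC, rfl⟩, ?_⟩
    rintro y ⟨c, hcC, rfl⟩
    show ∑ jk, grayMap σ M r jk * grayMap σ M c jk = 0
    rw [gray_inner σ γ M hM r c, hrD c hcC]
    simp
  · rintro ⟨⟨r, hrC, rfl⟩, hdual⟩
    refine ⟨r, ⟨hrC, ?_⟩, rfl⟩
    intro c hcC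
    apply joint_inj he α hα hroot σ hσ
    have hall : ∀ m : Fin e, ∑ i', α i' ^ (m : ℕ) * σ i' (∑ j, r j * c j) = 0 := by
      intro m
      have hc' : ((AdjoinRoot.root ((X : Polynomial F) ^ e - 1)) ^ (m : ℕ)) • c ∈ C :=
        C.smul_mem _ hcC
      have h0 := hdual _ ⟨_, hc', rfl⟩
      rw [gray_inner σ γ M hM] at h0
      have h1 : ∑ j, r j * (((AdjoinRoot.root ((X : Polynomial F) ^ e - 1)) ^ (m : ℕ)) • c) j
          = (AdjoinRoot.root ((X : Polynomial F) ^ e - 1)) ^ (m : ℕ) * ∑ j, r j * c j := by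
        rw [Finset.mul_sum]
        exact Finset.sum_congr rfl fun j _ => by
          simp only [Pi.smul_apply, smul_eq_mul]; ring
      rw [h1] at h0
      have h3 : ∑ i', σ i' ((AdjoinRoot.root ((X : Polynomial F) ^ e - 1)) ^ (m : ℕ)
            * ∑ j, r j * c j)
          = ∑ i', α i' ^ (m : ℕ) * σ i' (∑ j, r j * c j) :=
        Finset.sum_congr rfl fun i' _ => by rw [map_mul, map_pow, hσ]
      rw [h3] at h0
      exact (mul_eq_zero.mp h0).resolve_left hγ
    intro i
    exact congrFun (vand_kill α hα _ hall) i
end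

section
/- Let C be a linear code of length n over R. Then C is an LCD code over R (C ∩ C^⊥ = {0}) if and only if its Gray image φ(C) is an LCD code of length en over 𝔽_q (φ(C) ∩ (φ(C))^⊥ = {0}). -/
open Polynomial

noncomputable section LCDAux

open Polynomial Finset

/-- Evaluation of `σ_i` on `mk p` is polynomial evaluation at `α_i`. -/
lemma sigma_mk_eval {F : Type} [Field F] {e : ℕ} {a : F} (σi : Rring F e →ₐ[F] F)
    (h : σi (AdjoinRoot.root ((X : Polynomial F) ^ e - 1)) = a) (p : Polynomial F) :
    σi (AdjoinRoot.mk ((X : Polynomial F) ^ e - 1) p) = p.eval a := by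
  rw [← AdjoinRoot.aeval_eq, ← Polynomial.aeval_algHom_apply, h,
    ← Polynomial.coe_aeval_eq_eval]

lemma X_pow_sub_one_eq_prod' {F : Type} [Field F] {e : ℕ} (he : 1 ≤ e) (α : Fin e → F)
    (hα : Function.Injective α) (hroot : ∀ i, α i ^ e = 1) :
    (X : Polynomial F) ^ e - 1 = ∏ i, (X - C (α i)) := by
  have hm : ((X : Polynomial F) ^ e - 1).Monic := by
    simpa using Polynomial.monic_X_pow_sub_C (1 : F) (by omega)
  have hpm : (∏ i : Fin e, ((X : Polynomial F) - C (α i))).Monic :=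
    Polynomial.monic_prod_of_monic _ _ fun i _ => Polynomial.monic_X_sub_C _
  have hdvd : (∏ i : Fin e, ((X : Polynomial F) - C (α i))) ∣ (X : Polynomial F) ^ e - 1 := by
    refine Finset.prod_dvd_of_coprime
      ((Polynomial.pairwise_coprime_X_sub_C hα).set_pairwise _) fun i _ => ?_
    rw [Polynomial.dvd_iff_isRoot]
    simp [Polynomial.IsRoot, hroot i]
  have hdeg : ((X : Polynomial F) ^ e - 1).natDegree ≤
      (∏ i : Fin e, ((X : Polynomial F) - C (α i))).natDegree := by
    rw [Polynomial.natDegree_prod_of_monic _ _ fun i _ => Polynomial.monic_X_sub_C _]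
    simp [Polynomial.natDegree_X_sub_C]
    have : ((X : Polynomial F) ^ e - 1) = X ^ e - C 1 := by simp
    rw [this, Polynomial.natDegree_X_pow_sub_C]
  exact Polynomial.eq_of_monic_of_dvd_of_natDegree_le hpm hm hdvd hdeg

/-- If all `σ_i` vanish on `x` then `x = 0`. -/
lemma sigma_injective' {F : Type} [Field F] {e : ℕ} (he : 1 ≤ e) (α : Fin e → F)
    (hα : Function.Injective α) (hroot : ∀ i, α i ^ e = 1)
    (σ : Fin e → (Rring F e →ₐ[F] F))
    (hσ : ∀ i, σ i (AdjoinRoot.root ((X : Polynomial F) ^ e - 1)) = α i)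
    (x : Rring F e) (hx : ∀ i, σ i x = 0) : x = 0 := by
  obtain ⟨p, rfl⟩ := AdjoinRoot.mk_surjective x
  rw [AdjoinRoot.mk_eq_zero, X_pow_sub_one_eq_prod' he α hα hroot]
  refine Finset.prod_dvd_of_coprime
    ((Polynomial.pairwise_coprime_X_sub_C hα).set_pairwise _) fun i _ => ?_
  rw [Polynomial.dvd_iff_isRoot, Polynomial.IsRoot]
  rw [← sigma_mk_eval (σ i) (hσ i)]
  exact hx i

/-- Orthogonality relation from `M Mᵀ = γ I`. -/
lemma key_sum' {F : Type} [Field F] {e : ℕ} (γ : F) (M : Matrix (Fin e) (Fin e) F)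
    (hM : M * M.transpose = γ • (1 : Matrix (Fin e) (Fin e) F)) (v w : Fin e → F) :
    ∑ k, (∑ i, v i * M i k) * (∑ i, w i * M i k) = γ * ∑ i, v i * w i := by
  have hMM : ∀ i l, (∑ k, M i k * M l k) = if i = l then γ else 0 := by
    intro i l
    have h := congrFun (congrFun hM i) l
    simpa [Matrix.mul_apply, Matrix.smul_apply, Matrix.one_apply, mul_ite] using h
  calc ∑ k, (∑ i, v i * M i k) * (∑ i, w i * M i k)
      = ∑ k, ∑ i, ∑ l, v i * w l * (M i k * M l k) := by
        refine Finset.sum_congr rfl fun k _ => ?_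
        rw [Finset.sum_mul_sum]
        exact Finset.sum_congr rfl fun i _ => Finset.sum_congr rfl fun l _ => by ring
    _ = ∑ i, ∑ l, v i * w l * (∑ k, M i k * M l k) := by
        rw [Finset.sum_comm]
        refine Finset.sum_congr rfl fun i _ => ?_
        rw [Finset.sum_comm]
        exact Finset.sum_congr rfl fun l _ => (Finset.mul_sum _ _ _).symm
    _ = γ * ∑ i, v i * w i := by
        simp only [hMM, mul_ite, mul_zero]
        rw [Finset.mul_sum]
        refine Finset.sum_congr rfl fun i _ => ?_
        rw [Finset.sum_ite_eq _ i fun l => v i * w l * γ]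
        simp [mul_comm]

/-- The Gray map sends the standard pairing to `γ` times the trace of the pairing. -/
lemma gray_pairing' {F : Type} [Field F] {e n : ℕ} (σ : Fin e → (Rring F e →ₐ[F] F))
    (γ : F) (M : Matrix (Fin e) (Fin e) F)
    (hM : M * M.transpose = γ • (1 : Matrix (Fin e) (Fin e) F))
    (r s : Fin n → Rring F e) :
    ∑ jk : Fin n × Fin e, grayMap σ M r jk * grayMap σ M s jk
      = γ * ∑ i, σ i (∑ j, r j * s j) := by
  rw [Fintype.sum_prod_type]
  simp only [grayMap]
  have h1 : ∀ j : Fin n,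
      ∑ k, (∑ i, σ i (r j) * M i k) * (∑ i, σ i (s j) * M i k)
        = γ * ∑ i, σ i (r j * s j) := by
    intro j
    rw [key_sum' γ M hM]
    simp [map_mul]
  simp only [h1]
  rw [← Finset.mul_sum]
  congr 1
  rw [Finset.sum_comm]
  exact Finset.sum_congr rfl fun i _ => (map_sum (σ i) _ _).symm

end LCDAux

/-- A linear code `C` of length `n` over `R = 𝔽_q[u]/⟨u^e − 1⟩` is an
LCD code (`C ∩ C^⊥ = {0}`) if and only if its Gray image `φ(C)` is an LCD code of
length `en` over `𝔽_q` (`φ(C) ∩ (φ(C))^⊥ = {0}`). -/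
theorem lcd_iff_grayMap_lcd
    {F : Type} [Field F] [Fintype F] (e n : ℕ) (he : 2 ≤ e)
    (hdvd : e ∣ Fintype.card F - 1)
    (α : Fin e → F) (hα : Function.Injective α) (hroot : ∀ i, α i ^ e = 1)
    (σ : Fin e → (Rring F e →ₐ[F] F))
    (hσ : ∀ i, σ i (AdjoinRoot.root ((X : Polynomial F) ^ e - 1)) = α i)
    (γ : F) (hγ : γ ≠ 0) (M : Matrix (Fin e) (Fin e) F)
    (hM : M * M.transpose = γ • (1 : Matrix (Fin e) (Fin e) F))
    (C : Submodule (Rring F e) (Fin n → Rring F e)) :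
    C ⊓ dualCode C = ⊥ ↔
      (grayMap σ M '' (C : Set (Fin n → Rring F e))) ∩
        dualSet (grayMap σ M '' (C : Set (Fin n → Rring F e))) = {0} := by
  classical
  set φ := grayMap σ M with hφ
  have he1 : 1 ≤ e := by omega
  have hinj : ∀ x : Rring F e, (∀ i, σ i x = 0) → x = 0 :=
    sigma_injective' he1 α hα hroot σ hσ
  have hdelta : ∀ i0 : Fin e, ∃ z : Rring F e,
      ∀ i, σ i z = if i = i0 then 1 else 0 := by
    intro i0
    refine ⟨AdjoinRoot.mk _ (Lagrange.basis Finset.univ α i0), fun i => ?_⟩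
    rw [sigma_mk_eval (σ i) (hσ i)]
    by_cases h : i = i0
    · subst h
      simp [Lagrange.eval_basis_self hα.injOn (Finset.mem_univ i)]
    · simp [h, Lagrange.eval_basis_of_ne (Ne.symm h) (Finset.mem_univ i)]
  have h0 : φ (0 : Fin n → Rring F e) = 0 := by
    funext jk
    simp [hφ, grayMap]
  have hker : ∀ r : Fin n → Rring F e, φ r = 0 → r = 0 := by
    intro r hr
    funext j
    rw [Pi.zero_apply]
    refine hinj (r j) fun i' => ?_
    have hv : ∀ k, ∑ i, σ i (r j) * M i k = 0 := fun k => congrFun hr (j, k)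
    have := key_sum' γ M hM (fun i => σ i (r j)) (fun i => if i = i' then 1 else 0)
    simp only [hv, zero_mul, Finset.sum_const_zero] at this
    have hsum : ∑ i, σ i (r j) * (if i = i' then (1:F) else 0) = σ i' (r j) := by
      simp [mul_ite]
    rw [hsum] at this
    rcases mul_eq_zero.mp this.symm with h | h
    · exact absurd h hγ
    · exact h
  have hmain : (φ '' (C : Set (Fin n → Rring F e))) ∩
      dualSet (φ '' (C : Set (Fin n → Rring F e)))
        = φ '' ((C ⊓ dualCode C : Submodule (Rring F e) (Fin n → Rring F e)) :
            Set (Fin n → Rring F e)) := by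
    ext x
    constructor
    · rintro ⟨⟨r, hrC, rfl⟩, hxd⟩
      refine ⟨r, Submodule.mem_inf.mpr ⟨hrC, ?_⟩, rfl⟩
      intro s hsC
      set t := ∑ j, r j * s j with ht
      have hz : ∀ z : Rring F e, ∑ i, σ i z * σ i t = 0 := by
        intro z
        have hzs : z • s ∈ C := C.smul_mem z hsC
        have h1 := hxd _ ⟨z • s, hzs, rfl⟩
        rw [hφ, gray_pairing' σ γ M hM r (z • s)] at h1
        have h2 : ∑ j, r j * (z • s) j = z * t := by
          rw [ht, Finset.mul_sum]
          exact Finset.sum_congr rfl fun j _ => by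
            simp [Pi.smul_apply, smul_eq_mul]; ring
        rw [h2] at h1
        rcases mul_eq_zero.mp h1 with h | h
        · exact absurd h hγ
        · rw [← h]
          exact Finset.sum_congr rfl fun i _ => (map_mul (σ i) z t).symm
      refine hinj t fun i => ?_
      obtain ⟨z, hzδ⟩ := hdelta i
      have := hz z
      simp only [hzδ, ite_mul, one_mul, zero_mul] at this
      rwa [Finset.sum_ite_eq' _ i (fun i' => σ i' t), if_pos (Finset.mem_univ i)] at this
    · rintro ⟨r, hr, rfl⟩
      obtain ⟨hrC, hrD⟩ := Submodule.mem_inf.mp hr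
      refine ⟨⟨r, hrC, rfl⟩, ?_⟩
      rintro y ⟨s, hsC, rfl⟩
      rw [hφ, gray_pairing' σ γ M hM r s, hrD s hsC]
      simp
  rw [hmain]
  constructor
  · intro h
    rw [h]
    simp [h0]
  · intro h
    rw [eq_bot_iff]
    intro x hx
    have hx0 : φ x ∈ ({0} : Set (Fin n × Fin e → F)) := h ▸ ⟨x, hx, rfl⟩
    have := hker x (by simpa using hx0)
    simp [this]
end

section
/- Let g_1, …, g_e ∈ 𝔽_q[x] be monic divisors of x^n − 1, and let C be the ideal of R[x]/⟨x^n − 1⟩ generated by the residue class of g(x) = Σ_{i=1}^e μ_i·g_i(x) (coefficients of g_i viewed in R via the inclusion 𝔽_q ⊆ R). Then C is a free R-module if the degrees deg g_1, deg g_2, …, deg g_e are all equal, and C is not a free R-module if the degrees deg g_1, …, deg g_e are not all equal. -/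
set_option maxHeartbeats 1000000


open Polynomial

section aux1

lemma aux_span_equiv {F A : Type} [CommRing F] [CommRing A] [Algebra F A]
    (τ : A →ₐ[F] F) (ε : A) (hε : τ ε = 1)
    (hkey : ∀ r : A, ε * r = ε * algebraMap F A (τ r))
    (p q : Polynomial F)
    (hcancel : ∀ f : Polynomial F, p * q ∣ p * f → q ∣ f) :
    Nonempty ((Polynomial F ⧸ ((Ideal.span {q}).restrictScalars F)) ≃ₗ[F]
      ((Ideal.span {Ideal.Quotient.mk (Ideal.span {(p*q).map (algebraMap F A)})
        (Polynomial.C ε * p.map (algebraMap F A))}).restrictScalars F)) := by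
  set J : Ideal (Polynomial A) := Ideal.span {(p*q).map (algebraMap F A)} with hJ
  set gen : Polynomial A ⧸ J :=
    Ideal.Quotient.mk J (Polynomial.C ε * p.map (algebraMap F A)) with hgen
  set N := (Ideal.span {gen}).restrictScalars F with hN
  set φ : Polynomial F →ₐ[F] Polynomial A := Polynomial.mapAlgHom (Algebra.ofId F A) with hφ
  have hφapp : ∀ f : Polynomial F, φ f = f.map (algebraMap F A) := by
    intro f; rw [hφ, coe_mapAlgHom]; rfl
  set mkT : Polynomial A →ₐ[F] (Polynomial A ⧸ J) := Ideal.Quotient.mkₐ F J with hmkT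
  set Λ : Polynomial F →ₗ[F] (Polynomial A ⧸ J) :=
    (LinearMap.mulLeft F gen).comp (mkT.toLinearMap.comp φ.toLinearMap) with hΛ
  have hΛapp : ∀ f, Λ f = Ideal.Quotient.mk J (Polynomial.C ε * p.map (algebraMap F A)
      * f.map (algebraMap F A)) := by
    intro f
    simp only [hΛ, LinearMap.comp_apply, LinearMap.mulLeft_apply, AlgHom.toLinearMap_apply,
      hφapp, hmkT, Ideal.Quotient.mkₐ_eq_mk, hgen, ← map_mul]
  have hmem : ∀ f, Λ f ∈ N := by
    intro f
    rw [hΛapp]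
    refine Ideal.mem_span_singleton'.mpr ⟨Ideal.Quotient.mk J (f.map (algebraMap F A)), ?_⟩
    rw [hgen, ← map_mul]
    ring_nf
  set Λ0 : Polynomial F →ₗ[F] N := Λ.codRestrict N hmem with hΛ0
  have hker1 : (Ideal.span {q}).restrictScalars F ≤ LinearMap.ker Λ0 := by
    intro f hf
    obtain ⟨c, rfl⟩ := Ideal.mem_span_singleton'.mp hf
    have : Λ (c * q) = 0 := by
      rw [hΛapp, Ideal.Quotient.eq_zero_iff_mem, hJ]
      refine Ideal.mem_span_singleton.mpr ?_
      refine ⟨Polynomial.C ε * c.map (algebraMap F A), ?_⟩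
      rw [Polynomial.map_mul, Polynomial.map_mul]
      ring
    simp only [LinearMap.mem_ker, hΛ0]
    exact Subtype.ext this
  have hker2 : LinearMap.ker Λ0 ≤ (Ideal.span {q}).restrictScalars F := by
    intro f hf
    have h0 : Λ f = 0 := congrArg Subtype.val (LinearMap.mem_ker.mp hf)
    rw [hΛapp, Ideal.Quotient.eq_zero_iff_mem, hJ, Ideal.mem_span_singleton] at h0
    have hτmap : ∀ x : Polynomial F, (x.map (algebraMap F A)).map τ.toRingHom = x := by
      intro x; ext j; simp [Polynomial.coeff_map]
    have h1 : p * q ∣ p * f := by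
      have := map_dvd (Polynomial.mapRingHom τ.toRingHom) h0
      simp only [coe_mapRingHom, Polynomial.map_mul, hτmap, Polynomial.map_C, hε, map_one,
        Polynomial.C_1, one_mul] at this
      simpa [hε] using this
    exact Ideal.mem_span_singleton.mpr (hcancel f h1)
  have hsurj : Function.Surjective Λ0 := by
    rintro ⟨m, hm⟩
    obtain ⟨a, ha⟩ := Ideal.mem_span_singleton'.mp hm
    obtain ⟨r, rfl⟩ := Ideal.Quotient.mk_surjective a
    refine ⟨r.map τ.toRingHom, ?_⟩
    apply Subtype.ext
    show Λ (r.map τ.toRingHom) = m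
    rw [hΛapp, ← ha, hgen, ← map_mul]
    congr 1
    have hh : Polynomial.C ε * (r.map τ.toRingHom).map (algebraMap F A) = Polynomial.C ε * r := by
      ext j
      simp only [Polynomial.coeff_C_mul, Polynomial.coeff_map]
      exact (hkey (r.coeff j)).symm
    calc Polynomial.C ε * p.map (algebraMap F A) * (r.map τ.toRingHom).map (algebraMap F A)
        = (Polynomial.C ε * (r.map τ.toRingHom).map (algebraMap F A)) * p.map (algebraMap F A) := by
          ring
      _ = (Polynomial.C ε * r) * p.map (algebraMap F A) := by rw [hh]
      _ = r * (Polynomial.C ε * p.map (algebraMap F A)) := by ring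
  refine ⟨LinearEquiv.ofBijective (Submodule.liftQ _ Λ0 hker1) ⟨?_, ?_⟩⟩
  · rw [← LinearMap.ker_eq_bot]
    exact Submodule.ker_liftQ_eq_bot _ _ _ hker2
  · rw [← LinearMap.range_eq_top, Submodule.range_liftQ, LinearMap.range_eq_top]
    exact hsurj

lemma aux_free {A : Type} [CommRing A] (p q m : Polynomial A) (hp : p.Monic) (hmm : m.Monic)
    (hm : p * q = m) :
    Module.Free A ((Ideal.span {Ideal.Quotient.mk (Ideal.span {m}) p}).restrictScalars A) := by
  have hqm : q.Monic := hp.of_mul_monic_left (by rw [hm]; exact hmm)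
  have hcancel : ∀ f : Polynomial A, p * q ∣ p * f → q ∣ f := by
    rintro f ⟨c, hc⟩
    refine ⟨c, hp.isRegular.left ?_⟩
    show p * f = p * (q * c)
    rw [hc]; ring
  obtain ⟨eqv⟩ := aux_span_equiv (AlgHom.id A A) (1 : A) (by simp) (fun r => by simp) p q hcancel
  have h1 : (p*q).map (algebraMap A A) = m := by
    rw [← hm]
    simp [Algebra.algebraMap_self, Polynomial.map_id]
  have h2 : (Polynomial.C (1:A)) * p.map (algebraMap A A) = p := by
    simp [Algebra.algebraMap_self, Polynomial.map_id]
  rw [h1, h2] at eqv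
  haveI : Module.Free A (AdjoinRoot q) := Module.Free.of_basis (AdjoinRoot.powerBasis' hqm).basis
  have e2 : (AdjoinRoot q) ≃ₗ[A]
      (Polynomial A ⧸ (Ideal.span {q} : Ideal (Polynomial A)).restrictScalars A) :=
    (Submodule.Quotient.restrictScalarsEquiv A (Ideal.span {q} : Ideal (Polynomial A))).symm
  exact Module.Free.of_equiv (e2.trans eqv)

lemma aux_finrank {F A : Type} [Field F] [CommRing A] [Nontrivial A] [Algebra F A]
    (τ : A →ₐ[F] F) (ε : A) (hε : τ ε = 1)
    (hkey : ∀ r : A, ε * r = ε * algebraMap F A (τ r))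
    (p q : Polynomial F) (hp : p.Monic) (hq : q.Monic)
    (m : Polynomial A) (hm : (p*q).map (algebraMap F A) = m) :
    Module.finrank F ((Ideal.span {Ideal.Quotient.mk (Ideal.span {m})
      (Polynomial.C ε * p.map (algebraMap F A))}).restrictScalars F) = q.natDegree := by
  subst hm
  have hcancel : ∀ f : Polynomial F, p * q ∣ p * f → q ∣ f := fun f hf =>
    (mul_dvd_mul_iff_left hp.ne_zero).mp hf
  obtain ⟨eqv⟩ := aux_span_equiv τ ε hε hkey p q hcancel
  have e2 : (AdjoinRoot q) ≃ₗ[F]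
      (Polynomial F ⧸ (Ideal.span {q} : Ideal (Polynomial F)).restrictScalars F) :=
    (Submodule.Quotient.restrictScalarsEquiv F (Ideal.span {q} : Ideal (Polynomial F))).symm
  rw [← (e2.trans eqv).finrank_eq]
  rw [(AdjoinRoot.powerBasis hq.ne_zero).finrank]
  simp [AdjoinRoot.powerBasis]

def piSubmoduleEquiv {F N : Type} {ι : Type} [CommRing F] [AddCommGroup N] [Module F N]
    (p : ι → Submodule F N) :
    (Submodule.pi Set.univ p) ≃ₗ[F] (Π j, p j) where
  toFun x j := ⟨x.1 j, x.2 j (Set.mem_univ j)⟩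
  map_add' _ _ := rfl
  map_smul' _ _ := rfl
  invFun v := ⟨fun j => (v j).1, fun j _ => (v j).2⟩
  left_inv _ := rfl
  right_inv _ := rfl

lemma range_compLeft {F N : Type} {ι : Type} [CommRing F] [AddCommGroup N] [Module F N]
    (f : N →ₗ[F] N) :
    LinearMap.range (f.compLeft ι) = Submodule.pi Set.univ (fun _ => LinearMap.range f) := by
  ext x
  constructor
  · rintro ⟨v, rfl⟩ j _
    exact ⟨v j, rfl⟩
  · intro h
    choose v hv using fun j => h j (Set.mem_univ j)
    exact ⟨v, funext hv⟩

lemma aux_rank_range {F A M : Type} [Field F] [CommRing A] [Algebra F A] [FiniteDimensional F A]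
    [AddCommGroup M] [Module A M] [Module F M] [IsScalarTower F A M] (ε : A)
    {ι : Type} [Fintype ι] (b : Module.Basis ι A M) :
    Module.finrank F (LinearMap.range (Algebra.lsmul F F M ε)) =
      Fintype.card ι * Module.finrank F (LinearMap.range (LinearMap.mulLeft F ε)) := by
  set eF : M ≃ₗ[F] (ι → A) := b.equivFun.restrictScalars F with heF
  have hmap : Submodule.map (eF : M →ₗ[F] (ι → A)) (LinearMap.range (Algebra.lsmul F F M ε)) =
      LinearMap.range ((LinearMap.mulLeft F ε).compLeft ι) := by
    ext x
    constructor
    · rintro ⟨y, ⟨m, rfl⟩, rfl⟩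
      refine ⟨eF m, ?_⟩
      funext j
      show ε * (b.equivFun m j) = eF (ε • m) j
      have : eF (ε • m) = ε • (b.equivFun m) := by
        show b.equivFun (ε • m) = ε • b.equivFun m
        exact map_smul b.equivFun ε m
      rw [this]
      rfl
    · rintro ⟨v, rfl⟩
      refine ⟨(Algebra.lsmul F F M ε) (eF.symm (fun j => v j)), ⟨_, rfl⟩, ?_⟩
      show eF (ε • eF.symm v) = _
      have : eF (ε • eF.symm v) = ε • (eF (eF.symm v)) := by
        show b.equivFun (ε • _) = ε • b.equivFun _
        exact map_smul b.equivFun ε _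
      rw [this, eF.apply_symm_apply]
      rfl
  have h1 : Module.finrank F (LinearMap.range (Algebra.lsmul F F M ε)) =
      Module.finrank F (LinearMap.range ((LinearMap.mulLeft F ε).compLeft ι)) := by
    rw [← hmap]
    exact (LinearEquiv.finrank_map_eq eF _).symm
  rw [h1, range_compLeft]
  have h2 := (piSubmoduleEquiv (fun _ : ι => LinearMap.range (LinearMap.mulLeft F ε))).finrank_eq
  rw [h2, Module.finrank_pi_fintype, Finset.sum_const, Finset.card_univ, smul_eq_mul]

end aux1

section mu
variable {F : Type} [Field F] {e : ℕ}

lemma monic_xe (F : Type) [Field F] (he : 1 ≤ e) : ((X : Polynomial F) ^ e - 1).Monic := by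
  have := Polynomial.monic_X_pow_sub_C (1 : F) (by omega : e ≠ 0)
  simpa using this

lemma finrank_Rring (he : 1 ≤ e) : Module.finrank F (Rring F e) = e := by
  rw [(AdjoinRoot.powerBasis' (monic_xe F he)).finrank, AdjoinRoot.powerBasis'_dim]
  have := Polynomial.natDegree_X_pow_sub_C (R := F) (n := e) (r := 1)
  simpa using this

lemma finite_Rring (he : 1 ≤ e) : Module.Finite F (Rring F e) :=
  Module.Finite.of_basis (AdjoinRoot.powerBasis' (monic_xe F he)).basis

variable (σ : Fin e → (Rring F e →ₐ[F] F)) (μ : Fin e → Rring F e)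
  (hμ : ∀ i j, σ j (μ i) = if i = j then 1 else 0)

include hμ in
lemma sigma_inj (he : 1 ≤ e) :
    Function.Injective (fun (r : Rring F e) (j : Fin e) => σ j r) := by
  haveI := finite_Rring (F := F) he
  set Φ : Rring F e →ₗ[F] (Fin e → F) := LinearMap.pi (fun j => (σ j).toLinearMap) with hΦ
  have hsurj : Function.Surjective Φ := by
    intro v
    refine ⟨∑ i, v i • μ i, ?_⟩
    funext j
    have : Φ (∑ i, v i • μ i) j = ∑ i, v i * σ j (μ i) := by
      simp [hΦ, LinearMap.pi_apply, map_sum, map_smul, smul_eq_mul]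
    rw [this]
    rw [Finset.sum_eq_single j]
    · simp [hμ]
    · intro i _ hij; simp [hμ, hij]
    · simp
  have hrk : Module.finrank F (Rring F e) = Module.finrank F (Fin e → F) := by
    rw [finrank_Rring he, Module.finrank_pi]; simp
  have hinj : Function.Injective Φ :=
    (LinearMap.injective_iff_surjective_of_finrank_eq_finrank hrk).mpr hsurj
  exact hinj

include hμ in
lemma mu_sum (he : 1 ≤ e) : ∑ i, μ i = 1 := by
  apply sigma_inj σ μ hμ he
  funext j
  simp [map_sum, hμ, Finset.sum_ite_eq, map_one]

include hμ in
lemma mu_mul (he : 1 ≤ e) (i j : Fin e) : μ i * μ j = if i = j then μ i else 0 := by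
  apply sigma_inj σ μ hμ he
  funext k
  show σ k (μ i * μ j) = σ k (if i = j then μ i else 0)
  rw [apply_ite (σ k)]
  simp only [map_mul, hμ, map_zero]
  by_cases hik : i = k <;> by_cases hjk : j = k <;> by_cases hij : i = j <;> simp_all

include hμ in
lemma mu_smul (he : 1 ≤ e) (i : Fin e) (r : Rring F e) :
    μ i * r = μ i * algebraMap F (Rring F e) (σ i r) := by
  apply sigma_inj σ μ hμ he
  funext k
  simp only [map_mul, hμ, AlgHom.commutes]
  by_cases h : i = k
  · subst h; simp
  · simp [h]

include hμ in
lemma mu_ne (i : Fin e) : μ i ≠ 0 := by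
  intro h
  have := hμ i i
  rw [h] at this
  simp at this

end mu

theorem free_iff_degrees_equal'
    {F : Type} [Field F] [Fintype F] (e n : ℕ) [NeZero n] (he : 2 ≤ e)
    (hdvd : e ∣ Fintype.card F - 1)
    (α : Fin e → F) (hα : Function.Injective α) (hroot : ∀ i, α i ^ e = 1)
    (σ : Fin e → (Rring F e →ₐ[F] F))
    (hσ : ∀ i, σ i (AdjoinRoot.root ((X : Polynomial F) ^ e - 1)) = α i)
    (μ : Fin e → Rring F e)
    (hμ : ∀ i j, σ j (μ i) = if i = j then 1 else 0)
    (g : Fin e → Polynomial F)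
    (hmonic : ∀ i, (g i).Monic)
    (hgdvd : ∀ i, g i ∣ (X : Polynomial F) ^ n - 1) :
    ((∀ i j, (g i).natDegree = (g j).natDegree) →
      Module.Free (Rring F e)
        ((Ideal.span {Ideal.Quotient.mk
            (Ideal.span {(X : Polynomial (Rring F e)) ^ n - 1})
            (∑ i, Polynomial.C (μ i) * (g i).map (algebraMap F (Rring F e)))}).restrictScalars
          (Rring F e))) ∧
    ((¬ ∀ i j, (g i).natDegree = (g j).natDegree) →
      ¬ Module.Free (Rring F e)
        ((Ideal.span {Ideal.Quotient.mk
            (Ideal.span {(X : Polynomial (Rring F e)) ^ n - 1})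
            (∑ i, Polynomial.C (μ i) * (g i).map (algebraMap F (Rring F e)))}).restrictScalars
          (Rring F e))) := by
  have he1 : 1 ≤ e := by omega
  have hh' : ∀ i, ∃ hh : Polynomial F, g i * hh = (X : Polynomial F) ^ n - 1 := by
    intro i
    obtain ⟨c, hc⟩ := hgdvd i
    exact ⟨c, hc.symm⟩
  choose h hgh using hh'
  set G : Polynomial (Rring F e) := ∑ i, Polynomial.C (μ i) * (g i).map (algebraMap F (Rring F e)) with hG
  -- X^n - 1 over (Rring F e) and over F is monic
  have hXnF : ((X : Polynomial F) ^ n - 1).Monic := by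
    have := Polynomial.monic_X_pow_sub_C (1 : F) (NeZero.ne n)
    simpa using this
  have hXnR : ((X : Polynomial (Rring F e)) ^ n - 1).Monic := by
    haveI : Nontrivial (Rring F e) := by
      refine ⟨0, 1, fun h0 => ?_⟩
      have := congrArg (σ ⟨0, by omega⟩) h0
      simp at this
    have := Polynomial.monic_X_pow_sub_C (1 : (Rring F e)) (NeZero.ne n)
    simpa using this
  haveI hnontriv : Nontrivial (Rring F e) := by
    refine ⟨0, 1, fun h0 => ?_⟩
    have := congrArg (σ ⟨0, by omega⟩) h0
    simp at this
  -- the key polynomial identity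
  have hCG : ∀ i, Polynomial.C (μ i) * G =
      Polynomial.C (μ i) * (g i).map (algebraMap F (Rring F e)) := by
    intro i
    rw [hG, Finset.mul_sum]
    rw [Finset.sum_eq_single i]
    · rw [← mul_assoc, ← map_mul, mu_mul σ μ hμ he1 i i, if_pos rfl]
    · intro j _ hji
      rw [← mul_assoc, ← map_mul, mu_mul σ μ hμ he1 i j, if_neg (Ne.symm hji), map_zero, zero_mul]
    · simp
  have hmapXn : ∀ i : Fin e, ((g i) * (h i)).map (algebraMap F (Rring F e)) = (X : Polynomial (Rring F e)) ^ n - 1 := by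
    intro i
    rw [hgh i]
    simp [Polynomial.map_sub, Polynomial.map_pow, Polynomial.map_X, Polynomial.map_one]
  constructor
  · -- free direction
    intro hdeg
    set i0 : Fin e := ⟨0, by omega⟩ with hi0
    set d := (g i0).natDegree with hd0
    have hd : ∀ i, (g i).natDegree = d := fun i => hdeg i i0
    have hGmonic : G.Monic := by
      apply Polynomial.monic_of_natDegree_le_of_coeff_eq_one d
      · rw [hG]
        apply Polynomial.natDegree_sum_le_of_forall_le
        intro i _
        refine le_trans (Polynomial.natDegree_mul_le) ?_
        simp only [Polynomial.natDegree_C, zero_add]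
        refine le_trans Polynomial.natDegree_map_le ?_
        rw [hd i]
      · rw [hG, Polynomial.finset_sum_coeff]
        have : ∀ i : Fin e, (Polynomial.C (μ i) * (g i).map (algebraMap F (Rring F e))).coeff d = μ i := by
          intro i
          rw [Polynomial.coeff_C_mul, Polynomial.coeff_map]
          have : (g i).coeff d = 1 := by
            rw [← hd i]
            exact (hmonic i).coeff_natDegree
          rw [this, map_one, mul_one]
        rw [Finset.sum_congr rfl (fun i _ => this i)]
        exact mu_sum σ μ hμ he1
    set Hpoly : Polynomial (Rring F e) := ∑ i, Polynomial.C (μ i) * (h i).map (algebraMap F (Rring F e)) with hHp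
    have hGH : G * Hpoly = (X : Polynomial (Rring F e)) ^ n - 1 := by
      have hstep : G * Hpoly = ∑ i, Polynomial.C (μ i) * ((X : Polynomial (Rring F e)) ^ n - 1) := by
        rw [hG, hHp, Finset.sum_mul]
        apply Finset.sum_congr rfl
        intro i _
        rw [Finset.mul_sum]
        rw [Finset.sum_eq_single i]
        · have h1 : (Polynomial.C (μ i) * (g i).map (algebraMap F (Rring F e))) *
              (Polynomial.C (μ i) * (h i).map (algebraMap F (Rring F e))) =
              Polynomial.C (μ i * μ i) * (((g i) * (h i)).map (algebraMap F (Rring F e))) := by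
            rw [map_mul, Polynomial.map_mul]
            ring
          rw [h1, mu_mul σ μ hμ he1 i i, if_pos rfl, hmapXn i]
        · intro j _ hji
          have h1 : (Polynomial.C (μ i) * (g i).map (algebraMap F (Rring F e))) *
              (Polynomial.C (μ j) * (h j).map (algebraMap F (Rring F e))) =
              Polynomial.C (μ i * μ j) * ((g i).map (algebraMap F (Rring F e)) *
                (h j).map (algebraMap F (Rring F e))) := by
            rw [map_mul]
            ring
          rw [h1, mu_mul σ μ hμ he1 i j, if_neg (Ne.symm hji), map_zero, zero_mul]
        · simp
      rw [hstep, ← Finset.sum_mul, ← map_sum, mu_sum σ μ hμ he1, map_one, one_mul]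
    exact aux_free G Hpoly _ hGmonic hXnR hGH
  · -- non-free direction
    intro hdeg hfree
    set J : Ideal (Polynomial (Rring F e)) := Ideal.span {(X : Polynomial (Rring F e)) ^ n - 1} with hJdef
    set S := Polynomial (Rring F e) ⧸ J with hS
    set Csub : Submodule (Rring F e) S := (Ideal.span {Ideal.Quotient.mk J G}).restrictScalars (Rring F e) with hCsub
    haveI hFR : Module.Finite F (Rring F e) := finite_Rring he1
    haveI : Module.Finite (Rring F e) S :=
      Module.Finite.of_basis (AdjoinRoot.powerBasis' hXnR).basis
    haveI : Module.Finite F S := Module.Finite.trans (Rring F e) S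
    haveI : Module.Finite F ↥Csub := by
      have hfd : Module.Finite F ↥(Csub.restrictScalars F) := inferInstance
      exact hfd
    haveI : Module.Finite (Rring F e) ↥Csub := Module.Finite.of_restrictScalars_finite F (Rring F e) ↥Csub
    set ι := Module.Free.ChooseBasisIndex (Rring F e) ↥Csub with hι
    set b : Module.Basis ι (Rring F e) ↥Csub := Module.Free.chooseBasis (Rring F e) ↥Csub with hb
    set k := Fintype.card ι with hk
    -- algebraMap facts
    have halg : ∀ r : (Rring F e), algebraMap (Rring F e) S r = Ideal.Quotient.mk J (Polynomial.C r) := by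
      intro r
      rw [← Ideal.Quotient.mk_algebraMap, Polynomial.algebraMap_eq]
    have hsmul : ∀ (r : (Rring F e)) (p : Polynomial (Rring F e)),
        r • (Ideal.Quotient.mk J p) = Ideal.Quotient.mk J (Polynomial.C r * p) := by
      intro r p
      have h1 : Ideal.Quotient.mk J (r • p) = r • Ideal.Quotient.mk J p := by
        exact map_smul ((Ideal.Quotient.mkₐ (Rring F e) J).toLinearMap) r p
      rw [← h1, Polynomial.smul_eq_C_mul]
    -- component images
    have hmonh : ∀ i, (h i).Monic := by
      intro i
      exact (hmonic i).of_mul_monic_left (by rw [hgh i]; exact hXnF)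
    have hhdim : ∀ i : Fin e,
        Module.finrank F ((Ideal.span {Ideal.Quotient.mk J
          (Polynomial.C (μ i) * (g i).map (algebraMap F (Rring F e)))}).restrictScalars F)
          = (h i).natDegree := by
      intro i
      exact aux_finrank (σ i) (μ i) (by simpa using hμ i i) (mu_smul σ μ hμ he1 i)
        (g i) (h i) (hmonic i) (hmonh i) _ (hmapXn i)
    -- the image of Csub under multiplication by μ i
    have hkey : ∀ i : Fin e, k = (h i).natDegree := by
      intro i
      set Θ : ↥Csub →ₗ[F] S :=
        (Csub.subtype.restrictScalars F).comp
          ((Algebra.lsmul F F ↥Csub (μ i) : Module.End F ↥Csub)) with hΘ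
      have hrange : LinearMap.range Θ =
          (Ideal.span {Ideal.Quotient.mk J
            (Polynomial.C (μ i) * (g i).map (algebraMap F (Rring F e)))}).restrictScalars F := by
        ext x
        constructor
        · rintro ⟨⟨c, hc⟩, rfl⟩
          obtain ⟨a, ha⟩ := Ideal.mem_span_singleton'.mp hc
          obtain ⟨r, rfl⟩ := Ideal.Quotient.mk_surjective a
          have hval : Θ ⟨c, hc⟩ = μ i • c := rfl
          rw [hval]
          simp only [Submodule.restrictScalars_mem]
          rw [← ha, ← map_mul, hsmul]
          refine Ideal.mem_span_singleton'.mpr ⟨Ideal.Quotient.mk J r, ?_⟩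
          rw [← map_mul]
          congr 1
          rw [← hCG i]
          ring
        · intro hx
          simp only [Submodule.restrictScalars_mem] at hx
          obtain ⟨a, ha⟩ := Ideal.mem_span_singleton'.mp hx
          obtain ⟨r, rfl⟩ := Ideal.Quotient.mk_surjective a
          have hmem : Ideal.Quotient.mk J (r * G) ∈ Csub := by
            simp only [hCsub, Submodule.restrictScalars_mem]
            exact Ideal.mem_span_singleton'.mpr ⟨Ideal.Quotient.mk J r, by rw [← map_mul]⟩
          refine ⟨⟨Ideal.Quotient.mk J (r * G), hmem⟩, ?_⟩
          have hval : Θ ⟨Ideal.Quotient.mk J (r * G), hmem⟩ =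
              μ i • (Ideal.Quotient.mk J (r * G)) := rfl
          rw [hval, hsmul, ← ha, ← map_mul]
          congr 1
          rw [← hCG i]
          ring
      have hfr1 : Module.finrank F (LinearMap.range Θ) = (h i).natDegree := by
        rw [hrange, hhdim i]
      -- now compute the same rank via freeness
      have hinj : Function.Injective (Csub.subtype.restrictScalars F) :=
        Csub.injective_subtype
      have hcomp : LinearMap.range Θ = Submodule.map (Csub.subtype.restrictScalars F)
          (LinearMap.range (Algebra.lsmul F F ↥Csub (μ i) : Module.End F ↥Csub)) := by
        rw [hΘ, LinearMap.range_comp]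
      have hfr2 : Module.finrank F (LinearMap.range Θ) =
          Module.finrank F (LinearMap.range (Algebra.lsmul F F ↥Csub (μ i) :
            Module.End F ↥Csub)) := by
        rw [hcomp]
        exact (Submodule.equivMapOfInjective _ hinj _).finrank_eq.symm
      have hmurange : LinearMap.range (LinearMap.mulLeft F (μ i) : (Rring F e) →ₗ[F] (Rring F e)) =
          Submodule.span F {μ i} := by
        ext r
        simp only [LinearMap.mem_range, LinearMap.mulLeft_apply, Submodule.mem_span_singleton]
        constructor
        · rintro ⟨s, rfl⟩
          refine ⟨σ i s, ?_⟩
          rw [Algebra.smul_def, mu_smul σ μ hμ he1 i s]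
          ring
        · rintro ⟨c, rfl⟩
          refine ⟨algebraMap F (Rring F e) c, ?_⟩
          rw [Algebra.smul_def]
          ring
      have hfr3 : Module.finrank F (LinearMap.range (Algebra.lsmul F F ↥Csub (μ i) :
          Module.End F ↥Csub)) = k * 1 := by
        rw [aux_rank_range (μ i) b, hmurange, finrank_span_singleton (mu_ne σ μ hμ i)]
      rw [← hfr1, hfr2, hfr3, mul_one]
    -- degrees
    have hdegs : ∀ i, (g i).natDegree + (h i).natDegree = n := by
      intro i
      have h1 : ((g i) * (h i)).natDegree = n := by
        rw [hgh i]
        have := Polynomial.natDegree_X_pow_sub_C (R := F) (n := n) (r := (1:F))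
        simpa using this
      rwa [Polynomial.natDegree_mul (hmonic i).ne_zero (hmonh i).ne_zero] at h1
    apply hdeg
    intro i j
    have := hkey i
    have := hkey j
    have := hdegs i
    have := hdegs j
    omega


/-- Let `g_1, …, g_e` be monic divisors of `x^n − 1` in `𝔽_q[x]` and
let `C` be the cyclic code (ideal of `R[x]/⟨x^n − 1⟩`, `R = 𝔽_q[u]/⟨u^e − 1⟩`)
generated by the residue class of `g(x) = ∑ μ_i g_i(x)`. Then `C` is a free `R`-module
if all the degrees `deg g_i` are equal, and `C` is not a free `R`-module if the
degrees are not all equal. -/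
theorem free_iff_degrees_equal
    {F : Type} [Field F] [Fintype F] (e n : ℕ) [NeZero n] (he : 2 ≤ e)
    (hdvd : e ∣ Fintype.card F - 1)
    (α : Fin e → F) (hα : Function.Injective α) (hroot : ∀ i, α i ^ e = 1)
    (σ : Fin e → (Rring F e →ₐ[F] F))
    (hσ : ∀ i, σ i (AdjoinRoot.root ((X : Polynomial F) ^ e - 1)) = α i)
    (μ : Fin e → Rring F e)
    (hμ : ∀ i j, σ j (μ i) = if i = j then 1 else 0)
    (g : Fin e → Polynomial F)
    (hmonic : ∀ i, (g i).Monic)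
    (hgdvd : ∀ i, g i ∣ (X : Polynomial F) ^ n - 1) :
    ((∀ i j, (g i).natDegree = (g j).natDegree) →
      Module.Free (Rring F e)
        ((Ideal.span {Ideal.Quotient.mk
            (Ideal.span {(X : Polynomial (Rring F e)) ^ n - 1})
            (∑ i, Polynomial.C (μ i) * (g i).map (algebraMap F (Rring F e)))}).restrictScalars
          (Rring F e))) ∧
    ((¬ ∀ i j, (g i).natDegree = (g j).natDegree) →
      ¬ Module.Free (Rring F e)
        ((Ideal.span {Ideal.Quotient.mk
            (Ideal.span {(X : Polynomial (Rring F e)) ^ n - 1})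
            (∑ i, Polynomial.C (μ i) * (g i).map (algebraMap F (Rring F e)))}).restrictScalars
          (Rring F e))) := free_iff_degrees_equal' e n he hdvd α hα hroot σ hσ μ hμ g hmonic hgdvd
end
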